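/- arXiv:1110.6061 — 5 statements merged into one kernel-verified Lean document; each statement's English description precedes it below -/
import Mathlib

section
/- Let p : ℝ → ℂ be a polynomial function of degree n (i.e., p(x) = Σ_{k=0}^n p_k x^k with p_n ≠ 0), let ℓ_0, …, ℓ_n be n+1 pairwise distinct integers, and let a be a nonzero real number. Then there exist complex coefficients α_0, …, α_n such that p(x) = Σ_{i=0}^n α_i · p(a·x − ℓ_i) for all real x. -/
open Finset Matrix

private def Umat (n : ℕ) (p : ℕ → ℂ) : Matrix (Fin (n+1)) (Fin (n+1)) ℂ :=
  fun k j => if (k : ℕ) + (j : ℕ) ≤ n then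
    p ((k : ℕ) + (j : ℕ)) * (Nat.choose ((k : ℕ) + (j : ℕ)) (k : ℕ) : ℂ) else 0

private lemma Umat_det_ne_zero (n : ℕ) (p : ℕ → ℂ) (hp : p n ≠ 0) :
    (Umat n p).det ≠ 0 := by
  have hW : ((Umat n p).submatrix id ⇑(Fin.revPerm : Equiv.Perm (Fin (n+1)))).det
      = ∏ k : Fin (n+1), (p n * (Nat.choose n (k : ℕ) : ℂ)) := by
    rw [Matrix.det_of_upperTriangular]
    · refine Finset.prod_congr rfl fun k _ => ?_
      have hk : (k : ℕ) ≤ n := Nat.lt_succ_iff.mp k.isLt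
      have hrev : ((Fin.revPerm k : Fin (n+1)) : ℕ) = n - (k : ℕ) := by
        simp [Fin.revPerm, Fin.rev]
      simp only [Matrix.submatrix_apply, id_eq, Umat, hrev]
      rw [if_pos (by omega), Nat.add_sub_cancel' hk]
    · intro i j hij
      have hij' : (j : ℕ) < (i : ℕ) := hij
      have hrev : ((Fin.revPerm j : Fin (n+1)) : ℕ) = n - (j : ℕ) := by
        simp [Fin.revPerm, Fin.rev]
      have hj : (j : ℕ) ≤ n := Nat.lt_succ_iff.mp j.isLt
      simp only [Matrix.submatrix_apply, id_eq, Umat, hrev]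
      rw [if_neg (by omega)]
  have hWne : ((Umat n p).submatrix id ⇑(Fin.revPerm : Equiv.Perm (Fin (n+1)))).det ≠ 0 := by
    rw [hW]
    refine Finset.prod_ne_zero_iff.mpr fun k _ => mul_ne_zero hp ?_
    exact Nat.cast_ne_zero.mpr (Nat.choose_pos (Nat.lt_succ_iff.mp k.isLt)).ne'
  rw [Matrix.det_permute' (Fin.revPerm : Equiv.Perm (Fin (n+1)))] at hWne
  intro h
  rw [h, mul_zero] at hWne
  exact hWne rfl

/-- Key reindexing: the `j`-sum against powers of `c` equals the binomial sum. -/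
private lemma Umat_row_sum (n : ℕ) (p : ℕ → ℂ) (k : Fin (n+1)) (c : ℂ) :
    ∑ j : Fin (n+1), Umat n p k j * c ^ (j : ℕ)
      = ∑ m ∈ range (n+1), p m * (Nat.choose m (k : ℕ) : ℂ) * c ^ (m - (k : ℕ)) := by
  have hk : (k : ℕ) ≤ n := Nat.lt_succ_iff.mp k.isLt
  have h1 : ∑ j : Fin (n+1), Umat n p k j * c ^ (j : ℕ)
      = ∑ j ∈ range (n+1), (if (k : ℕ) + j ≤ n then
          p ((k : ℕ) + j) * (Nat.choose ((k : ℕ) + j) (k : ℕ) : ℂ) else 0) * c ^ j := by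
    rw [← Fin.sum_univ_eq_sum_range]
    rfl
  have h2 : ∑ j ∈ range (n+1), (if (k : ℕ) + j ≤ n then
        p ((k : ℕ) + j) * (Nat.choose ((k : ℕ) + j) (k : ℕ) : ℂ) else 0) * c ^ j
      = ∑ j ∈ range (n+1-(k : ℕ)),
        p ((k : ℕ) + j) * (Nat.choose ((k : ℕ) + j) (k : ℕ) : ℂ) * c ^ j := by
    rw [← Finset.sum_subset (Finset.range_subset_range.mpr (show n + 1 - (k:ℕ) ≤ n + 1 by omega))]
    · refine Finset.sum_congr rfl fun j hj => ?_
      have hj2 : j < n + 1 - (k : ℕ) := Finset.mem_range.mp hj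
      rw [if_pos (by omega)]
    · intro j hj hj'
      have hj1 : j < n + 1 := Finset.mem_range.mp hj
      have hj2 : ¬ j < n + 1 - (k : ℕ) := fun h => hj' (Finset.mem_range.mpr h)
      rw [if_neg (by omega), zero_mul]
  have h3 : ∑ m ∈ range (n+1), p m * (Nat.choose m (k : ℕ) : ℂ) * c ^ (m - (k : ℕ))
      = ∑ m ∈ Finset.Ico (k : ℕ) (n+1),
          p m * (Nat.choose m (k : ℕ) : ℂ) * c ^ (m - (k : ℕ)) := by
    refine (Finset.sum_subset (fun m hm => Finset.mem_range.mpr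
        (Finset.mem_Ico.mp hm).2) ?_).symm
    intro m hm hm'
    have hm1 : m < n + 1 := Finset.mem_range.mp hm
    have hm2 : m < (k : ℕ) := by
      by_contra h
      exact hm' (Finset.mem_Ico.mpr ⟨le_of_not_gt h, hm1⟩)
    rw [Nat.choose_eq_zero_of_lt hm2, Nat.cast_zero, mul_zero, zero_mul]
  have h4 : ∑ m ∈ Finset.Ico (k : ℕ) (n+1),
        p m * (Nat.choose m (k : ℕ) : ℂ) * c ^ (m - (k : ℕ))
      = ∑ j ∈ range (n+1-(k : ℕ)),
        p ((k : ℕ) + j) * (Nat.choose ((k : ℕ) + j) (k : ℕ) : ℂ) * c ^ j := by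
    rw [Finset.sum_Ico_eq_sum_range]
    exact Finset.sum_congr rfl fun j _ => by rw [Nat.add_sub_cancel_left]
  rw [h1, h2, h3, h4]

/-- **Polynomial refinement theorem.** Let `p(x) = Σ_{k=0}^n p_k x^k` be a
polynomial function of degree `n` (so `p n ≠ 0`), let `ℓ 0, …, ℓ n` be `n + 1`
pairwise distinct integers, and let `a ≠ 0` be real. Then there exist complex
coefficients `α 0, …, α n` with `p(x) = Σ_{i=0}^n α i · p (a·x − ℓ i)` for all
real `x`. -/
theorem polynomial_finitely_refinable
    (n : ℕ) (p : ℕ → ℂ) (hp : p n ≠ 0)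
    (ℓ : Fin (n + 1) → ℤ) (hℓ : Function.Injective ℓ)
    (a : ℝ) (ha : a ≠ 0) :
    ∃ α : Fin (n + 1) → ℂ,
      ∀ x : ℝ,
        (∑ k ∈ Finset.range (n + 1), p k * (x : ℂ) ^ k) =
          ∑ i : Fin (n + 1), α i *
            ∑ k ∈ Finset.range (n + 1), p k * ((a * x : ℝ) - (ℓ i : ℝ) : ℂ) ^ k := by
  set w : Fin (n+1) → ℂ := fun i => -(ℓ i : ℂ) with hw
  have hwinj : Function.Injective w := by
    intro i j h
    apply hℓ
    have : (ℓ i : ℂ) = (ℓ j : ℂ) := by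
      have := neg_injective h
      exact this
    exact_mod_cast this
  set D : Matrix (Fin (n+1)) (Fin (n+1)) ℂ :=
    Matrix.diagonal (fun k : Fin (n+1) => (a : ℂ) ^ (k : ℕ)) with hD
  set B : Matrix (Fin (n+1)) (Fin (n+1)) ℂ :=
    D * Umat n p * (Matrix.vandermonde w)ᵀ with hB
  have hdet : B.det ≠ 0 := by
    rw [hB, Matrix.det_mul, Matrix.det_mul, Matrix.det_transpose]
    refine mul_ne_zero (mul_ne_zero ?_ (Umat_det_ne_zero n p hp)) ?_
    · rw [hD, Matrix.det_diagonal]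
      exact Finset.prod_ne_zero_iff.mpr fun k _ =>
        pow_ne_zero _ (by exact_mod_cast ha)
    · exact Matrix.det_vandermonde_ne_zero_iff.mpr hwinj
  have hBentry : ∀ (k i : Fin (n+1)), B k i
      = (a : ℂ) ^ (k : ℕ) * ∑ m ∈ range (n+1),
          p m * (Nat.choose m (k : ℕ) : ℂ) * w i ^ (m - (k : ℕ)) := by
    intro k i
    rw [hB, Matrix.mul_assoc, hD, Matrix.diagonal_mul, ← Umat_row_sum n p k (w i),
      Matrix.mul_apply]
    simp [Matrix.vandermonde]
  refine ⟨(B⁻¹).mulVec (fun k : Fin (n+1) => p (k : ℕ)), fun x => ?_⟩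
  set α : Fin (n+1) → ℂ := (B⁻¹).mulVec (fun k : Fin (n+1) => p (k : ℕ)) with hα
  have hmv : B.mulVec α = fun k : Fin (n+1) => p (k : ℕ) := by
    rw [hα, Matrix.mulVec_mulVec, Matrix.mul_nonsing_inv B (isUnit_iff_ne_zero.mpr hdet),
      Matrix.one_mulVec]
  -- expand the binomials
  have hbase : ∀ i : Fin (n+1), ((a * x : ℝ) - (ℓ i : ℝ) : ℂ) = (a : ℂ) * x + w i := by
    intro i; push_cast; ring
  have hpow : ∀ (i : Fin (n+1)) (m : ℕ), m ≤ n →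
      ((a : ℂ) * x + w i) ^ m
        = ∑ k ∈ range (n+1), ((a : ℂ) * x) ^ k * w i ^ (m - k) * (Nat.choose m k : ℂ) := by
    intro i m hm
    rw [add_pow]
    refine Finset.sum_subset (Finset.range_subset_range.mpr (by omega)) ?_
    intro k hk hk'
    have h1 : m < k := by
      have := Finset.mem_range.mp hk
      have h2 : ¬ k < m + 1 := fun h => hk' (Finset.mem_range.mpr h)
      omega
    rw [Nat.choose_eq_zero_of_lt h1, Nat.cast_zero, mul_zero]
  calc ∑ k ∈ range (n+1), p k * (x : ℂ) ^ k
      = ∑ k : Fin (n+1), p (k : ℕ) * (x : ℂ) ^ (k : ℕ) := by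
        rw [← Fin.sum_univ_eq_sum_range]
    _ = ∑ k : Fin (n+1), (x : ℂ) ^ (k : ℕ) * (B.mulVec α) k := by
        refine Finset.sum_congr rfl fun k _ => ?_
        rw [hmv]; ring
    _ = ∑ k : Fin (n+1), ∑ i : Fin (n+1), (x : ℂ) ^ (k : ℕ) * (B k i * α i) := by
        refine Finset.sum_congr rfl fun k _ => ?_
        rw [Matrix.mulVec, dotProduct, Finset.mul_sum]
    _ = ∑ i : Fin (n+1), ∑ k : Fin (n+1), (x : ℂ) ^ (k : ℕ) * (B k i * α i) :=
        Finset.sum_comm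
    _ = ∑ i : Fin (n+1), α i *
          ∑ k ∈ range (n+1), p k * ((a * x : ℝ) - (ℓ i : ℝ) : ℂ) ^ k := by
        refine Finset.sum_congr rfl fun i _ => ?_
        rw [Finset.mul_sum]
        calc ∑ k : Fin (n+1), (x : ℂ) ^ (k : ℕ) * (B k i * α i)
            = ∑ k : Fin (n+1), α i * ∑ m ∈ range (n+1),
                p m * (((a : ℂ) * x) ^ (k : ℕ) * w i ^ (m - (k : ℕ))
                  * (Nat.choose m (k : ℕ) : ℂ)) := by
              refine Finset.sum_congr rfl fun k _ => ?_
              rw [hBentry]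
              simp only [Finset.mul_sum, Finset.sum_mul]
              refine Finset.sum_congr rfl fun m _ => ?_
              rw [mul_pow]
              ring
          _ = ∑ m ∈ range (n+1), α i * (p m *
                ∑ k ∈ range (n+1), ((a : ℂ) * x) ^ k * w i ^ (m - k)
                  * (Nat.choose m k : ℂ)) := by
              rw [Fin.sum_univ_eq_sum_range
                (fun k => α i * ∑ m ∈ range (n+1), p m * (((a : ℂ) * x) ^ k
                  * w i ^ (m - k) * (Nat.choose m k : ℂ)))]
              simp only [Finset.mul_sum]
              rw [Finset.sum_comm]
          _ = ∑ m ∈ range (n+1), α i * (p m * ((a * x : ℝ) - (ℓ i : ℝ) : ℂ) ^ m) := by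
              refine Finset.sum_congr rfl fun m hm => ?_
              rw [hbase, hpow i m (Nat.lt_succ_iff.mp (Finset.mem_range.mp hm))]
end

section
/- Every polynomial function p : ℝ → ℂ is finitely 2-refinable: there exist a finite set S ⊆ ℤ and complex coefficients (α_ℓ)_{ℓ ∈ S} such that p(x) = Σ_{ℓ ∈ S} α_ℓ · p(2·x − ℓ) for all real x. -/
/-!
Put `Q(y) = q(2y)`, a nonzero polynomial of the same degree `n` as `q`. In characteristic zero
the integer translates of `Q` span all polynomials of degree `≤ n`: the difference
`Q(y + 1) - Q(y)` has degree exactly `n - 1`, its translates are differences of translates of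
`Q`, and after subtracting a multiple of `Q` to kill the top coefficient, induction on `n`
applies. Hence `q(x) = Σ c_m Q(x + m) = Σ c_m q(2x + 2m)`, a refinement equation with
`ℓ = -2m`.
-/

open Polynomial

namespace Polynomial

section CommRing

variable {R : Type*} [CommRing R]

theorem coeff_taylor_sub_self_of_natDegree_eq_succ {f : R[X]} {n : ℕ}
    (hf : f.natDegree = n + 1) (r : R) :
    (taylor r f - f).coeff n = (n + 1) * r * f.leadingCoeff := by
  have hdeg : (hasseDeriv n f).natDegree < 2 :=
    (natDegree_hasseDeriv_le f n).trans_lt (by omega)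
  rw [coeff_sub, taylor_coeff, eval_eq_sum_range' hdeg, Finset.sum_range_succ,
    Finset.sum_range_one, hasseDeriv_coeff, hasseDeriv_coeff, leadingCoeff, hf, add_comm 1 n,
    Nat.choose_succ_self_right]
  simp
  ring

theorem natDegree_taylor_sub_self_le (f : R[X]) (r : R) :
    (taylor r f - f).natDegree ≤ f.natDegree - 1 := by
  refine natDegree_le_pred ((natDegree_sub_le _ _).trans (by rw [natDegree_taylor, max_self])) ?_
  rw [coeff_sub, coeff_taylor_natDegree, coeff_natDegree, sub_self]

theorem coeff_taylor_sub_self_ne_zero [NoZeroDivisors R] [CharZero R] {f : R[X]} {n : ℕ}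
    (hf : f.natDegree = n + 1) {r : R} (hr : r ≠ 0) : (taylor r f - f).coeff n ≠ 0 := by
  have hf0 : f ≠ 0 := by rintro rfl; simp at hf
  rw [coeff_taylor_sub_self_of_natDegree_eq_succ hf]
  exact mul_ne_zero (mul_ne_zero (Nat.cast_add_one_ne_zero n) hr) (leadingCoeff_ne_zero.mpr hf0)

theorem natDegree_taylor_sub_self [NoZeroDivisors R] [CharZero R] {f : R[X]} {n : ℕ}
    (hf : f.natDegree = n + 1) {r : R} (hr : r ≠ 0) : (taylor r f - f).natDegree = n :=
  le_antisymm ((natDegree_taylor_sub_self_le f r).trans_eq (by rw [hf, Nat.add_sub_cancel]))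
    (le_natDegree_of_ne_zero (coeff_taylor_sub_self_ne_zero hf hr))

noncomputable def spanIntTranslates (q : R[X]) : Submodule R R[X] :=
  Submodule.span R (Set.range fun m : ℤ => taylor (m : R) q)

theorem taylor_intCast_mem_spanIntTranslates (q : R[X]) (m : ℤ) :
    taylor (m : R) q ∈ spanIntTranslates q :=
  Submodule.subset_span ⟨m, rfl⟩

theorem self_mem_spanIntTranslates (q : R[X]) : q ∈ spanIntTranslates q := by
  simpa using taylor_intCast_mem_spanIntTranslates q 0

theorem spanIntTranslates_taylor_one_sub_self_le (q : R[X]) :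
    spanIntTranslates (taylor 1 q - q) ≤ spanIntTranslates q := by
  refine Submodule.span_le.mpr ?_
  rintro _ ⟨m, rfl⟩
  have hshift :
      taylor (m : R) (taylor 1 q - q) = taylor ((m + 1 : ℤ) : R) q - taylor (m : R) q := by
    rw [map_sub, taylor_taylor]
    push_cast
    rfl
  change taylor (m : R) (taylor 1 q - q) ∈ spanIntTranslates q
  rw [hshift]
  exact sub_mem (taylor_intCast_mem_spanIntTranslates q _)
    (taylor_intCast_mem_spanIntTranslates q m)

theorem exists_eval_eq_sum_of_mem_spanIntTranslates {q r : R[X]}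
    (hr : r ∈ spanIntTranslates q) :
    ∃ (S : Finset ℤ) (c : ℤ → R), ∀ x, r.eval x = ∑ m ∈ S, c m * q.eval (x + m) := by
  obtain ⟨c, rfl⟩ := Finsupp.mem_span_range_iff_exists_finsupp.mp hr
  exact ⟨c.support, c, fun x => by simp [Finsupp.sum, eval_finsetSum, taylor_eval]⟩

end CommRing

theorem mem_spanIntTranslates_of_natDegree_le {K : Type*} [Field K] [CharZero K] {q r : K[X]}
    (hq : q ≠ 0) (hr : r.natDegree ≤ q.natDegree) : r ∈ spanIntTranslates q := by
  induction hn : q.natDegree generalizing q r with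
  | zero =>
    rw [hn] at hr
    rw [eq_C_of_natDegree_eq_zero hn] at hq ⊢
    rw [eq_C_of_natDegree_le_zero hr]
    have ha : q.coeff 0 ≠ 0 := fun h => hq (by rw [h, C_0])
    rw [show C (r.coeff 0) = (r.coeff 0 / q.coeff 0) • C (q.coeff 0) by
      rw [smul_C, smul_eq_mul, div_mul_cancel₀ _ ha]]
    exact Submodule.smul_mem _ _ (self_mem_spanIntTranslates _)
  | succ n ih =>
    have hd : (taylor 1 q - q).natDegree = n := natDegree_taylor_sub_self hn one_ne_zero
    have hd0 : taylor 1 q - q ≠ 0 := fun h =>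
      coeff_taylor_sub_self_ne_zero hn one_ne_zero (by rw [h, coeff_zero])
    set c := r.coeff (n + 1) / q.leadingCoeff
    have hs : (r - c • q).natDegree ≤ n := by
      have hle : (r - c • q).natDegree ≤ n + 1 :=
        (natDegree_sub_le _ _).trans (max_le (hn ▸ hr) ((natDegree_smul_le _ _).trans hn.le))
      refine natDegree_le_pred hle ?_
      rw [coeff_sub, coeff_smul, smul_eq_mul, ← hn, coeff_natDegree, hn,
        div_mul_cancel₀ _ (leadingCoeff_ne_zero.mpr hq), sub_self]
    have hsmem : r - c • q ∈ spanIntTranslates q :=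
      spanIntTranslates_taylor_one_sub_self_le q (ih hd0 (hs.trans hd.ge) hd)
    simpa using add_mem hsmem (Submodule.smul_mem _ c (self_mem_spanIntTranslates q))

end Polynomial

/-- Every polynomial function `p : ℝ → ℂ` is finitely `2`-refinable: there
exist a finite set `S ⊆ ℤ` and complex coefficients `(α ℓ)_{ℓ ∈ S}` such that
`p x = Σ_{ℓ ∈ S} α ℓ · p (2·x − ℓ)` for all real `x`. -/
theorem polynomial_finitely_two_refinable
    (q : Polynomial ℂ) (p : ℝ → ℂ) (hpq : ∀ x : ℝ, p x = q.eval (x : ℂ)) :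
    ∃ (S : Finset ℤ) (α : ℤ → ℂ),
      ∀ x : ℝ, p x = ∑ ℓ ∈ S, α ℓ * p (2 * x - (ℓ : ℝ)) := by
  rcases eq_or_ne q 0 with rfl | hq
  · exact ⟨∅, 0, fun x => by simp [hpq x]⟩
  set Q := q.comp (C 2 * X) with hQ
  have hQ0 : Q ≠ 0 :=
    (comp_C_mul_X_eq_zero_iff (mem_nonZeroDivisors_of_ne_zero two_ne_zero)).not.mpr hq
  have hdeg : Q.natDegree = q.natDegree := by
    rw [natDegree_comp, natDegree_C_mul_X 2 two_ne_zero, mul_one]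
  obtain ⟨S, c, hc⟩ := exists_eval_eq_sum_of_mem_spanIntTranslates
    (mem_spanIntTranslates_of_natDegree_le hQ0 hdeg.ge)
  refine ⟨S.image fun m => -(2 * m), fun ℓ => c (-(ℓ / 2)), fun x => ?_⟩
  rw [Finset.sum_image fun a _ b _ h => by simpa using h, hpq, hc]
  refine Finset.sum_congr rfl fun m _ => ?_
  have hm : -(-(2 * m) / 2) = m := by omega
  simp [hpq, hQ, hm, mul_add]
end

section
/- Let p(x) = Σ_{k=0}^n p_k x^k be a complex polynomial with p_n ≠ 0, let ℓ_0, …, ℓ_n be integers, let a ≠ 0 be real, and let α_0, …, α_n be complex numbers. Define the (n+1)×(n+1) matrices (indexed from 0 to n): D_a diagonal with (D_a)_{i,i} = a^i; C upper triangular with C_{i,j} = p_{n−j+i}·binom(n−j+i,i) for i ≤ j and 0 otherwise; and V with V_{i,j} = (−ℓ_j)^{n−i}. Let m be the column vector (α_0, …, α_n) and let P be the column vector (p_0, …, p_n). Then p(x) = Σ_{i=0}^n α_i · p(a·x − ℓ_i) holds for all real x if and only if P = D_a · C · V · m. -/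
lemma refinement_aux_coeffs_zero (N : ℕ) (c : ℕ → ℂ)
    (h : ∀ x : ℝ, ∑ k ∈ Finset.range N, c k * (x : ℂ) ^ k = 0) :
    ∀ k < N, c k = 0 := by
  set f : Polynomial ℂ := ∑ k ∈ Finset.range N, Polynomial.C (c k) * Polynomial.X ^ k with hf
  have hsub : Set.range ((↑) : ℝ → ℂ) ⊆ {x | f.IsRoot x} := by
    rintro z ⟨x, rfl⟩
    simp only [Polynomial.IsRoot, hf, Polynomial.eval_finset_sum, Polynomial.eval_mul,
      Polynomial.eval_C, Polynomial.eval_pow, Polynomial.eval_X, Set.mem_setOf_eq]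
    exact h x
  have hf0 : f = 0 := Polynomial.eq_zero_of_infinite_isRoot f
    ((Set.infinite_range_of_injective Complex.ofReal_injective).mono hsub)
  intro k hk
  have := congrArg (fun g => Polynomial.coeff g k) hf0
  simpa [hf, Polynomial.finset_sum_coeff, Polynomial.coeff_X_pow, hk] using this

lemma refinement_aux_reindex_icc (n i : ℕ) (f : ℕ → ℂ) :
    ∑ j ∈ Finset.Icc i n, f j = ∑ k ∈ Finset.Icc i n, f (n - k + i) := by
  apply Finset.sum_nbij' (i := fun k => n - k + i) (j := fun k => n - k + i)
  case h => intro x hx; simp only [Finset.mem_Icc] at hx; congr 1; omega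
  all_goals intros; simp_all [Finset.mem_Icc]; try omega

lemma refinement_aux_filter_le (n i : ℕ) :
    (Finset.range (n + 1)).filter (fun k => i ≤ k) = Finset.Icc i n := by
  ext x; simp [Nat.lt_succ_iff]; omega

lemma refinement_aux_filter_ge (n k : ℕ) (hk : k ≤ n) :
    (Finset.range (n + 1)).filter (fun s => s ≤ k) = Finset.range (k + 1) := by
  ext x; simp [Nat.lt_succ_iff]; omega

lemma refinement_aux_matrix (n : ℕ) (p : ℕ → ℂ)
    (ℓ : Fin (n + 1) → ℤ) (a : ℝ) (α : Fin (n + 1) → ℂ)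
    (D C V : Matrix (Fin (n + 1)) (Fin (n + 1)) ℂ)
    (hD : D = Matrix.diagonal fun i : Fin (n + 1) => (a : ℂ) ^ (i : ℕ))
    (hC : ∀ i j : Fin (n + 1),
      C i j = if (i : ℕ) ≤ (j : ℕ)
        then p (n - (j : ℕ) + (i : ℕ)) * ((n - (j : ℕ) + (i : ℕ)).choose (i : ℕ) : ℂ)
        else 0)
    (hV : ∀ i j : Fin (n + 1), V i j = (-(ℓ j : ℂ)) ^ (n - (i : ℕ)))
    (m : Fin (n + 1) → ℂ) (hm : m = α) (i : Fin (n + 1)) :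
    (D * C * V).mulVec m i =
      (a : ℂ) ^ (i : ℕ) * ∑ k ∈ Finset.Icc (i : ℕ) n,
        p k * (k.choose (i : ℕ) : ℂ) * ∑ t : Fin (n + 1), α t * (-(ℓ t : ℂ)) ^ (k - (i : ℕ)) := by
  rw [← Matrix.mulVec_mulVec, ← Matrix.mulVec_mulVec]
  have hVm : ∀ j : Fin (n + 1), V.mulVec m j
      = ∑ t : Fin (n + 1), α t * (-(ℓ t : ℂ)) ^ (n - (j : ℕ)) := by
    intro j
    simp only [Matrix.mulVec, dotProduct, hV, hm]
    exact Finset.sum_congr rfl fun t _ => mul_comm _ _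
  have hCVm : C.mulVec (V.mulVec m) i
      = ∑ k ∈ Finset.Icc (i : ℕ) n,
          p k * (k.choose (i : ℕ) : ℂ) *
            ∑ t : Fin (n + 1), α t * (-(ℓ t : ℂ)) ^ (k - (i : ℕ)) := by
    rw [Matrix.mulVec]
    simp only [dotProduct, hC, hVm, ite_mul, zero_mul]
    rw [Fin.sum_univ_eq_sum_range
      (fun j => if (i : ℕ) ≤ j then
        p (n - j + (i : ℕ)) * ((n - j + (i : ℕ)).choose (i : ℕ) : ℂ) *
          ∑ t : Fin (n + 1), α t * (-(ℓ t : ℂ)) ^ (n - j) else 0)]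
    rw [← Finset.sum_filter, refinement_aux_filter_le, refinement_aux_reindex_icc]
    apply Finset.sum_congr rfl
    intro k hk
    simp only [Finset.mem_Icc] at hk
    have h1 : n - (n - k + (i : ℕ)) + (i : ℕ) = k := by omega
    have h2 : n - (n - k + (i : ℕ)) = k - (i : ℕ) := by omega
    rw [h1, h2]
  rw [hD, Matrix.mulVec_diagonal, hCVm]

lemma refinement_aux_expansion (n : ℕ) (p : ℕ → ℂ) (ℓ : Fin (n + 1) → ℤ) (a : ℝ)
    (α : Fin (n + 1) → ℂ) (x : ℂ) :
    (∑ t : Fin (n + 1), α t * ∑ k ∈ Finset.range (n + 1),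
        p k * ((a : ℂ) * x - (ℓ t : ℂ)) ^ k)
      = ∑ s ∈ Finset.range (n + 1),
          ((a : ℂ) ^ s * ∑ k ∈ Finset.Icc s n,
            p k * (k.choose s : ℂ) * ∑ t : Fin (n + 1), α t * (-(ℓ t : ℂ)) ^ (k - s)) * x ^ s := by
  have key : ∀ (t : Fin (n + 1)) (k : ℕ), k ≤ n →
      α t * (p k * ((a : ℂ) * x - (ℓ t : ℂ)) ^ k)
        = ∑ s ∈ Finset.range (n + 1), if s ≤ k then
            α t * (p k * (k.choose s : ℂ) * (-(ℓ t : ℂ)) ^ (k - s) * (a : ℂ) ^ s * x ^ s)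
          else 0 := by
    intro t k hk
    rw [sub_eq_add_neg, add_pow, ← refinement_aux_filter_ge n k hk, Finset.sum_filter,
      Finset.mul_sum, Finset.mul_sum]
    refine Finset.sum_congr rfl fun s _ => ?_
    split_ifs with h
    · ring_nf
    · simp
  calc (∑ t : Fin (n + 1), α t * ∑ k ∈ Finset.range (n + 1),
        p k * ((a : ℂ) * x - (ℓ t : ℂ)) ^ k)
      = ∑ t : Fin (n + 1), ∑ k ∈ Finset.range (n + 1), ∑ s ∈ Finset.range (n + 1),
          if s ≤ k then
            α t * (p k * (k.choose s : ℂ) * (-(ℓ t : ℂ)) ^ (k - s) * (a : ℂ) ^ s * x ^ s)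
          else 0 := by
        refine Finset.sum_congr rfl fun t _ => ?_
        rw [Finset.mul_sum]
        exact Finset.sum_congr rfl fun k hk =>
          key t k (Nat.lt_succ_iff.mp (Finset.mem_range.mp hk))
    _ = ∑ t : Fin (n + 1), ∑ s ∈ Finset.range (n + 1), ∑ k ∈ Finset.range (n + 1),
          if s ≤ k then
            α t * (p k * (k.choose s : ℂ) * (-(ℓ t : ℂ)) ^ (k - s) * (a : ℂ) ^ s * x ^ s)
          else 0 := Finset.sum_congr rfl fun t _ => Finset.sum_comm
    _ = ∑ s ∈ Finset.range (n + 1), ∑ t : Fin (n + 1), ∑ k ∈ Finset.range (n + 1),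
          if s ≤ k then
            α t * (p k * (k.choose s : ℂ) * (-(ℓ t : ℂ)) ^ (k - s) * (a : ℂ) ^ s * x ^ s)
          else 0 := Finset.sum_comm
    _ = ∑ s ∈ Finset.range (n + 1), ∑ k ∈ Finset.range (n + 1), ∑ t : Fin (n + 1),
          if s ≤ k then
            α t * (p k * (k.choose s : ℂ) * (-(ℓ t : ℂ)) ^ (k - s) * (a : ℂ) ^ s * x ^ s)
          else 0 := Finset.sum_congr rfl fun s _ => Finset.sum_comm
    _ = _ := by
        refine Finset.sum_congr rfl fun s _ => ?_
        have step : ∀ k ∈ Finset.range (n + 1),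
            (∑ t : Fin (n + 1), if s ≤ k then
              α t * (p k * (k.choose s : ℂ) * (-(ℓ t : ℂ)) ^ (k - s) * (a : ℂ) ^ s * x ^ s)
            else 0)
            = if s ≤ k then
                (∑ t : Fin (n + 1),
                  α t * (p k * (k.choose s : ℂ) * (-(ℓ t : ℂ)) ^ (k - s) * (a : ℂ) ^ s * x ^ s))
              else 0 := by
          intro k _
          split_ifs with h
          · rfl
          · simp
        rw [Finset.sum_congr rfl step, ← Finset.sum_filter, refinement_aux_filter_le]
        simp only [Finset.mul_sum, Finset.sum_mul]
        exact Finset.sum_congr rfl fun k _ => Finset.sum_congr rfl fun t _ => by ring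



/-- The refinement identity `p(x) = Σ_{i=0}^n α i · p (a·x − ℓ i)` holds for
all real `x` if and only if the matrix equation `P = D_a · C · V · m` holds,
where `D_a` is diagonal with `(D_a)_{i,i} = a^i`, `C` is the upper triangular
matrix with `C i j = p (n−j+i)·binom (n−j+i) i` for `i ≤ j`, `V` is the
Vandermonde-type matrix with `V i j = (−ℓ j)^(n−i)`, `m = (α 0, …, α n)` and
`P = (p 0, …, p n)`. -/
theorem refinement_iff_matrix_equation
    (n : ℕ) (p : ℕ → ℂ) (hp : p n ≠ 0)
    (ℓ : Fin (n + 1) → ℤ) (a : ℝ) (ha : a ≠ 0) (α : Fin (n + 1) → ℂ)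
    (D C V : Matrix (Fin (n + 1)) (Fin (n + 1)) ℂ)
    (hD : D = Matrix.diagonal fun i : Fin (n + 1) => (a : ℂ) ^ (i : ℕ))
    (hC : ∀ i j : Fin (n + 1),
      C i j = if (i : ℕ) ≤ (j : ℕ)
        then p (n - (j : ℕ) + (i : ℕ)) * ((n - (j : ℕ) + (i : ℕ)).choose (i : ℕ) : ℂ)
        else 0)
    (hV : ∀ i j : Fin (n + 1), V i j = (-(ℓ j : ℂ)) ^ (n - (i : ℕ)))
    (m P : Fin (n + 1) → ℂ)
    (hm : m = α) (hP : ∀ i : Fin (n + 1), P i = p (i : ℕ)) :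
    (∀ x : ℝ,
        (∑ k ∈ Finset.range (n + 1), p k * (x : ℂ) ^ k) =
          ∑ i : Fin (n + 1), α i *
            ∑ k ∈ Finset.range (n + 1), p k * ((a * x : ℝ) - (ℓ i : ℝ) : ℂ) ^ k)
      ↔ P = (D * C * V).mulVec m := by
  set Q : ℕ → ℂ := fun s =>
    (a : ℂ) ^ s * ∑ k ∈ Finset.Icc s n,
      p k * (k.choose s : ℂ) * ∑ t : Fin (n + 1), α t * (-(ℓ t : ℂ)) ^ (k - s) with hQ
  have hM : ∀ i : Fin (n + 1), (D * C * V).mulVec m i = Q (i : ℕ) :=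
    fun i => refinement_aux_matrix n p ℓ a α D C V hD hC hV m hm i
  have hcast : ∀ (x : ℝ) (t : Fin (n + 1)),
      (((a * x : ℝ) - (ℓ t : ℝ)) : ℂ) = (a : ℂ) * (x : ℂ) - (ℓ t : ℂ) := by
    intro x t; push_cast; ring
  have hRHS : ∀ x : ℝ,
      (∑ i : Fin (n + 1), α i *
        ∑ k ∈ Finset.range (n + 1), p k * ((a * x : ℝ) - (ℓ i : ℝ) : ℂ) ^ k)
      = ∑ s ∈ Finset.range (n + 1), Q s * (x : ℂ) ^ s := by
    intro x
    rw [← refinement_aux_expansion n p ℓ a α (x : ℂ)]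
    exact Finset.sum_congr rfl fun t _ => by rw [hcast x t]
  constructor
  · intro h
    funext i
    rw [hP, hM]
    have h0 : ∀ x : ℝ, ∑ k ∈ Finset.range (n + 1), (p k - Q k) * (x : ℂ) ^ k = 0 := by
      intro x
      have hx := h x
      rw [hRHS x] at hx
      simp only [sub_mul, Finset.sum_sub_distrib]
      rw [hx, sub_self]
    have := refinement_aux_coeffs_zero (n + 1) _ h0 (i : ℕ) i.isLt
    exact sub_eq_zero.mp this
  · intro h x
    rw [hRHS x]
    refine Finset.sum_congr rfl fun k hk => ?_
    have hk' : k < n + 1 := Finset.mem_range.mp hk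
    have := congrFun h ⟨k, hk'⟩
    rw [hP, hM] at this
    rw [this]
end

section
/- Let p : ℝ → ℂ be a polynomial function of degree n with p_n ≠ 0, let ℓ_0, …, ℓ_n be n+1 pairwise distinct integers, and let a be a nonzero real number. Then the complex coefficients α_0, …, α_n satisfying p(x) = Σ_{i=0}^n α_i · p(a·x − ℓ_i) for all real x are unique: if (α_i) and (β_i) both satisfy this identity, then α_i = β_i for all i. -/
/-!
Substituting `x = y / a` shows that both masks express `p(y / a)` through the translates
`p(y - ℓ_i)`, so it suffices that these translates are linearly independent. If
`∑ γ_i p(X - ℓ_i) = 0`, its `k`-th Taylor coefficient says that the functional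
`f ↦ ∑ γ_i f(-ℓ_i)` kills the `k`-th Hasse derivative of `p`. These derivatives have every degree
`0, …, n`, so they span all polynomials of degree at most `n`; evaluating the functional at the
Lagrange basis polynomials of the distinct nodes `-ℓ_i` gives `γ = 0`.
-/

open Polynomial Finset

namespace Polynomial

variable {K : Type*} [Field K] [CharZero K]

theorem degree_hasseDeriv_natDegree_sub {q : K[X]} (hq : q ≠ 0) {i : ℕ} (hi : i ≤ q.natDegree) :
    (hasseDeriv (q.natDegree - i) q).degree = i := by
  refine degree_eq_of_le_of_coeff_ne_zero ?_ ?_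
  · exact degree_le_natDegree.trans
      (by exact_mod_cast (natDegree_hasseDeriv_le _ _).trans (by omega))
  · rw [hasseDeriv_coeff, Nat.add_sub_cancel' hi]
    exact mul_ne_zero (by exact_mod_cast (Nat.choose_pos (by omega)).ne')
      (leadingCoeff_ne_zero.mpr hq)

/-- A `Sequence` needs a polynomial of every degree; monomials fill in beyond `natDegree q`. -/
noncomputable def hasseDerivSequence (q : K[X]) (hq : q ≠ 0) : Sequence K where
  elems' i := if i ≤ q.natDegree then hasseDeriv (q.natDegree - i) q else X ^ i
  degree_eq' i := by
    split_ifs with hi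
    exacts [degree_hasseDeriv_natDegree_sub hq hi, degree_X_pow i]

theorem degreeLE_le_span_hasseDeriv (q : K[X]) :
    degreeLE K q.degree ≤ Submodule.span K (Set.range fun k => hasseDeriv k q) := by
  rcases eq_or_ne q 0 with rfl | hq
  · intro f hf
    rw [degree_eq_bot.mp (le_bot_iff.mp (mem_degreeLE.mp hf))]
    exact zero_mem _
  rw [degree_eq_natDegree hq, ← (hasseDerivSequence q hq).span_degreeLE
    fun i _ => (leadingCoeff_ne_zero.mpr (Sequence.ne_zero _ i)).isUnit]
  refine Submodule.span_mono ?_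
  rintro _ ⟨i, hi, rfl⟩
  exact ⟨_, (if_pos (Set.mem_Iic.mp hi)).symm⟩

theorem sum_mul_eval_eq_zero_of_sum_smul_taylor_eq_zero {ι : Type*} {s : Finset ι}
    {γ d : ι → K} {q : K[X]} (h : ∑ i ∈ s, γ i • taylor (d i) q = 0)
    {f : K[X]} (hf : f.degree ≤ q.degree) :
    ∑ i ∈ s, γ i * f.eval (d i) = 0 := by
  let L : K[X] →ₗ[K] K := ∑ i ∈ s, γ i • leval (d i)
  have hL : ∀ g, L g = ∑ i ∈ s, γ i * g.eval (d i) := fun g => by simp [L]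
  have hker : Set.range (fun k => hasseDeriv k q) ⊆ LinearMap.ker L := by
    rintro _ ⟨k, rfl⟩
    simpa [hL, finsetSum_coeff, taylor_coeff] using congrArg (coeff · k) h
  rw [← hL, ← LinearMap.mem_ker]
  exact Submodule.span_le.mpr hker (degreeLE_le_span_hasseDeriv q (mem_degreeLE.mpr hf))

theorem linearIndependent_taylor {ι : Type*} [Fintype ι] {d : ι → K}
    (hd : Function.Injective d) {q : K[X]} (hq : q ≠ 0)
    (hcard : Fintype.card ι ≤ q.natDegree + 1) :
    LinearIndependent K fun i => taylor (d i) q := by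
  classical
  refine Fintype.linearIndependent_iff.mpr fun γ h j => ?_
  have hdeg : (Lagrange.basis univ d j).degree ≤ q.degree := by
    rw [Lagrange.degree_basis hd.injOn (mem_univ j), degree_eq_natDegree hq, card_univ]
    exact_mod_cast (by omega)
  have := sum_mul_eval_eq_zero_of_sum_smul_taylor_eq_zero h hdeg
  rwa [sum_eq_single j (fun i _ hij => by rw [Lagrange.eval_basis_of_ne hij.symm (mem_univ i),
    mul_zero]) (by simp), Lagrange.eval_basis_self hd.injOn (mem_univ j), mul_one] at this

theorem eq_of_eval_ofReal_eq {f g : ℂ[X]} (h : ∀ x : ℝ, f.eval (x : ℂ) = g.eval (x : ℂ)) :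
    f = g :=
  eq_of_infinite_eval_eq f g <| (Set.infinite_range_of_injective Complex.ofReal_injective).mono
    (by rintro _ ⟨x, rfl⟩; exact h x)

end Polynomial

/-- **Uniqueness of the refinement mask.** For a polynomial
`p(x) = Σ_{k=0}^n p_k x^k` of exact degree `n`, pairwise distinct integer
shifts `ℓ 0, …, ℓ n`, and a nonzero real dilation `a`, the coefficients
`α 0, …, α n` satisfying `p(x) = Σ_{i=0}^n α i · p (a·x − ℓ i)` for all real
`x` are unique. -/
theorem refinement_mask_unique
    (n : ℕ) (p : ℕ → ℂ) (hp : p n ≠ 0)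
    (ℓ : Fin (n + 1) → ℤ) (hℓ : Function.Injective ℓ)
    (a : ℝ) (ha : a ≠ 0) (α β : Fin (n + 1) → ℂ)
    (hα : ∀ x : ℝ,
        (∑ k ∈ Finset.range (n + 1), p k * (x : ℂ) ^ k) =
          ∑ i : Fin (n + 1), α i *
            ∑ k ∈ Finset.range (n + 1), p k * ((a * x : ℝ) - (ℓ i : ℝ) : ℂ) ^ k)
    (hβ : ∀ x : ℝ,
        (∑ k ∈ Finset.range (n + 1), p k * (x : ℂ) ^ k) =
          ∑ i : Fin (n + 1), β i *
            ∑ k ∈ Finset.range (n + 1), p k * ((a * x : ℝ) - (ℓ i : ℝ) : ℂ) ^ k) :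
    α = β := by
  set q : ℂ[X] := ∑ k ∈ range (n + 1), C (p k) * X ^ k
  have hq_coeff : q.coeff n = p n := by simp [q]
  have hq : q ≠ 0 := fun h => hp (by rw [← hq_coeff, h, coeff_zero])
  have hdeg : n ≤ q.natDegree := le_natDegree_of_ne_zero (hq_coeff ▸ hp)
  have hd : Function.Injective fun i => -(ℓ i : ℂ) :=
    fun i j h => hℓ (by exact_mod_cast neg_inj.mp h)
  have eval_mask : ∀ (c : Fin (n + 1) → ℂ) (y : ℝ),
      (∑ i, c i • taylor (-(ℓ i : ℂ)) q).eval (y : ℂ) = ∑ i, c i *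
        ∑ k ∈ range (n + 1), p k * ((a * (y / a) : ℝ) - (ℓ i : ℝ) : ℂ) ^ k := by
    intro c y
    simp [q, eval_finsetSum, mul_div_cancel₀ y ha, sub_eq_add_neg]
  funext i
  refine Fintype.linearIndependent_iffₛ.mp (linearIndependent_taylor hd hq (by simpa using hdeg))
    α β (eq_of_eval_ofReal_eq fun y => ?_) i
  rw [eval_mask, eval_mask, ← hα, ← hβ]
end

section
/- Let p(x) = Σ_{k=0}^n p_k x^k be a complex polynomial with p_n ≠ 0, let ℓ_0, …, ℓ_n be n+1 pairwise distinct integers, and let a be a nonzero real number. Define the (n+1)×(n+1) matrices (indexed from 0 to n): D_a diagonal with (D_a)_{i,i} = a^i; C upper triangular with C_{i,j} = p_{n−j+i}·binom(n−j+i,i) for i ≤ j and 0 otherwise; and V with V_{i,j} = (−ℓ_j)^{n−i}. Let P be the column vector (p_0, …, p_n) and set m = V⁻¹ · C⁻¹ · D_a⁻¹ · P with entries m = (α_0, …, α_n). Then p(x) = Σ_{i=0}^n α_i · p(a·x − ℓ_i) for all real x. -/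
/-!
Put `f = ∑ p_k X^k`. The entry `C i j = p (n - j + i) * binom (n - j + i) i` is the coefficient
of `X^(n - j)` in the `i`-th Hasse derivative `Hᵢ f`, so column `l` of `C V` lists the values
`(Hᵢ f)(-ℓ l)`, i.e. the Taylor coefficients of `f` at `-ℓ l`, and column `l` of `D C V` is the
coefficient vector of `f(a X - ℓ l)`. The refinement identity is therefore the equation
`D C V m = P`, which holds because `D`, the triangular `C` (diagonal `p n * binom n i`) and the
reversed Vandermonde matrix `V` are invertible.
-/

open Polynomial Matrix Finset

variable {R : Type*} [CommRing R] {n : ℕ}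

lemma eval_ofFn_succ [DecidableEq R] (p : ℕ → R) (x : R) :
    (ofFn (n + 1) fun k => p k).eval x = ∑ k ∈ range (n + 1), p k * x ^ k := by
  rw [eval_eq_sum_range' (ofFn_natDegree_lt (Nat.le_add_left 1 n) _)]
  exact sum_congr rfl fun k hk => by rw [ofFn_coeff_eq_val_of_lt _ (mem_range.mp hk)]

lemma eval_eq_sum_fin {g : R[X]} (hg : g.natDegree ≤ n) (z : R) :
    g.eval z = ∑ i : Fin (n + 1), g.coeff i * z ^ (i : ℕ) := by
  rw [Fin.sum_univ_eq_sum_range (fun i => g.coeff i * z ^ i),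
    eval_eq_sum_range' (Nat.lt_succ_of_le hg)]

lemma eval_eq_sum_fin_rev {g : R[X]} (hg : g.natDegree ≤ n) (z : R) :
    g.eval z = ∑ j : Fin (n + 1), g.coeff (n - j) * z ^ (n - j) := by
  rw [Fin.sum_univ_eq_sum_range (fun j => g.coeff (n - j) * z ^ (n - j)),
    ← sum_range_reflect, eval_eq_sum_range' (Nat.lt_succ_of_le hg)]
  refine sum_congr rfl fun j hj => ?_
  rw [show n - (n + 1 - 1 - j) = j by have := mem_range.mp hj; omega]

noncomputable def hasseDerivMatrix (n : ℕ) (f : R[X]) : Matrix (Fin (n + 1)) (Fin (n + 1)) R :=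
  of fun i j => (hasseDeriv i f).coeff (n - j)

lemma hasseDerivMatrix_ofFn_apply [DecidableEq R] (p : ℕ → R) (i j : Fin (n + 1)) :
    hasseDerivMatrix n (ofFn (n + 1) fun k => p k) i j =
      if (i : ℕ) ≤ j then p (n - j + i) * ((n - j + i).choose i : R) else 0 := by
  rw [hasseDerivMatrix, of_apply, hasseDeriv_coeff]
  split_ifs with hij
  · rw [ofFn_coeff_eq_val_of_lt _ (by omega), mul_comm]
  · rw [ofFn_coeff_eq_zero_of_ge _ (by omega), mul_zero]

lemma hasseDerivMatrix_isUpperTriangular {f : R[X]} (hf : f.natDegree ≤ n) :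
    (hasseDerivMatrix n f).IsUpperTriangular := by
  intro i j hji
  rw [hasseDerivMatrix, of_apply, hasseDeriv_coeff, coeff_eq_zero_of_natDegree_lt, mul_zero]
  have := j.is_lt
  simp only [id] at hji
  omega

lemma det_hasseDerivMatrix {f : R[X]} (hf : f.natDegree ≤ n) :
    (hasseDerivMatrix n f).det = ∏ i : Fin (n + 1), (n.choose i : R) * f.coeff n := by
  rw [det_of_isUpperTriangular (hasseDerivMatrix_isUpperTriangular hf)]
  refine prod_congr rfl fun i _ => ?_
  rw [hasseDerivMatrix, of_apply, hasseDeriv_coeff, Nat.sub_add_cancel (Fin.is_le i)]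

lemma det_hasseDerivMatrix_ne_zero [IsDomain R] [CharZero R] {f : R[X]} (hf : f.natDegree ≤ n)
    (hfn : f.coeff n ≠ 0) : (hasseDerivMatrix n f).det ≠ 0 := by
  rw [det_hasseDerivMatrix hf]
  exact prod_ne_zero_iff.mpr fun i _ =>
    mul_ne_zero (Nat.cast_ne_zero.mpr (Nat.choose_pos (Fin.is_le i)).ne') hfn

def revVandermonde (z : Fin (n + 1) → R) : Matrix (Fin (n + 1)) (Fin (n + 1)) R :=
  of fun i j => z j ^ (n - i)

lemma revVandermonde_eq_transpose_submatrix (z : Fin (n + 1) → R) :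
    revVandermonde z = ((vandermonde z).submatrix id Fin.revPerm)ᵀ := by
  ext i j
  simp only [revVandermonde, of_apply, transpose_apply, submatrix_apply, id_eq, Fin.revPerm_apply,
    vandermonde_apply, Fin.val_rev]
  congr 1
  omega

lemma det_revVandermonde_ne_zero [IsDomain R] {z : Fin (n + 1) → R} (hz : Function.Injective z) :
    (revVandermonde z).det ≠ 0 := by
  rw [revVandermonde_eq_transpose_submatrix, det_transpose, det_permute']
  refine mul_ne_zero ?_ (det_vandermonde_ne_zero_iff.mpr hz)
  rcases Int.units_eq_one_or (Equiv.Perm.sign (Fin.revPerm (n := n + 1))) with h | h <;> simp [h]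

lemma hasseDerivMatrix_mul_revVandermonde_apply {f : R[X]} (hf : f.natDegree ≤ n)
    (z : Fin (n + 1) → R) (i l : Fin (n + 1)) :
    (hasseDerivMatrix n f * revVandermonde z) i l = (taylor (z l) f).coeff i := by
  rw [taylor_coeff, mul_apply, eval_eq_sum_fin_rev
    ((natDegree_hasseDeriv_le f i).trans (Nat.sub_le_of_le_add (Nat.le_add_right_of_le hf)))]
  rfl

lemma sum_diagonal_pow_mul_hasseDerivMatrix_mul_revVandermonde_apply {f : R[X]}
    (hf : f.natDegree ≤ n) (c : R) (z : Fin (n + 1) → R) (l : Fin (n + 1)) (y : R) :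
    ∑ i, (diagonal (fun i : Fin (n + 1) => c ^ (i : ℕ)) * hasseDerivMatrix n f *
      revVandermonde z) i l * y ^ (i : ℕ) = f.eval (c * y + z l) := by
  rw [← taylor_eval, eval_eq_sum_fin ((natDegree_taylor f (z l)).le.trans hf)]
  refine sum_congr rfl fun i _ => ?_
  rw [Matrix.mul_assoc, diagonal_mul, hasseDerivMatrix_mul_revVandermonde_apply hf]
  ring

/-- **Matricial algorithm for polynomial refinement.** With `D_a` diagonal
(`(D_a)_{i,i} = a^i`), `C` upper triangular
(`C i j = p (n−j+i)·binom (n−j+i) i` for `i ≤ j`, else `0`), and `V` the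
Vandermonde-type matrix (`V i j = (−ℓ j)^(n−i)`), the mask
`m = V⁻¹ · C⁻¹ · D_a⁻¹ · P` (with `P = (p 0, …, p n)`) satisfies the
refinement identity `p(x) = Σ_{i=0}^n (m i) · p (a·x − ℓ i)` for all real `x`. -/
theorem refinement_mask_algorithm
    (n : ℕ) (p : ℕ → ℂ) (hp : p n ≠ 0)
    (ℓ : Fin (n + 1) → ℤ) (hℓ : Function.Injective ℓ)
    (a : ℝ) (ha : a ≠ 0)
    (D C V : Matrix (Fin (n + 1)) (Fin (n + 1)) ℂ)
    (hD : D = Matrix.diagonal fun i : Fin (n + 1) => (a : ℂ) ^ (i : ℕ))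
    (hC : ∀ i j : Fin (n + 1),
      C i j = if (i : ℕ) ≤ (j : ℕ)
        then p (n - (j : ℕ) + (i : ℕ)) * ((n - (j : ℕ) + (i : ℕ)).choose (i : ℕ) : ℂ)
        else 0)
    (hV : ∀ i j : Fin (n + 1), V i j = (-(ℓ j : ℂ)) ^ (n - (i : ℕ)))
    (P m : Fin (n + 1) → ℂ)
    (hP : ∀ i : Fin (n + 1), P i = p (i : ℕ))
    (hm : m = (V⁻¹ * C⁻¹ * D⁻¹).mulVec P) :
    ∀ x : ℝ,
      (∑ k ∈ Finset.range (n + 1), p k * (x : ℂ) ^ k) =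
        ∑ i : Fin (n + 1), m i *
          ∑ k ∈ Finset.range (n + 1), p k * ((a * x : ℝ) - (ℓ i : ℝ) : ℂ) ^ k := by
  classical
  set f : ℂ[X] := ofFn (n + 1) fun k => p k
  have hf : f.natDegree ≤ n := Nat.le_of_lt_succ (ofFn_natDegree_lt (Nat.le_add_left 1 n) _)
  have hfn : f.coeff n = p n := ofFn_coeff_eq_val_of_lt _ n.lt_succ_self
  have hCf : C = hasseDerivMatrix n f := ext fun i j => by rw [hC, hasseDerivMatrix_ofFn_apply]
  have hVz : V = revVandermonde fun j => -(ℓ j : ℂ) := ext hV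
  have hdet : IsUnit (D * C * V).det := by
    rw [isUnit_iff_ne_zero, det_mul, det_mul, hD, hCf, hVz, det_diagonal]
    refine mul_ne_zero (mul_ne_zero ?_ (det_hasseDerivMatrix_ne_zero hf (hfn ▸ hp)))
      (det_revVandermonde_ne_zero fun i j hij => hℓ (by exact_mod_cast neg_injective hij))
    exact prod_ne_zero_iff.mpr fun i _ => pow_ne_zero _ (by exact_mod_cast ha)
  have hmP : (D * C * V) *ᵥ m = P := by
    rw [hm, ← Matrix.mul_inv_rev, ← Matrix.mul_inv_rev, ← Matrix.mul_assoc, mulVec_mulVec,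
      mul_nonsing_inv _ hdet, one_mulVec]
  intro x
  have hcol : ∀ l, ((fun i : Fin (n + 1) => (x : ℂ) ^ (i : ℕ)) ᵥ* (D * C * V)) l =
      ∑ k ∈ range (n + 1), p k * ((a * x : ℝ) - (ℓ l : ℝ) : ℂ) ^ k := fun l => by
    simp only [vecMul, dotProduct, mul_comm ((x : ℂ) ^ _)]
    rw [hD, hCf, hVz, sum_diagonal_pow_mul_hasseDerivMatrix_mul_revVandermonde_apply hf,
      eval_ofFn_succ]
    push_cast
    simp only [sub_eq_add_neg]
  calc ∑ k ∈ range (n + 1), p k * (x : ℂ) ^ k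
      = ((D * C * V) *ᵥ m) ⬝ᵥ fun i : Fin (n + 1) => (x : ℂ) ^ (i : ℕ) := by
        rw [hmP, dotProduct, ← Fin.sum_univ_eq_sum_range (fun k => p k * (x : ℂ) ^ k)]
        simp only [hP]
    _ = m ⬝ᵥ ((fun i : Fin (n + 1) => (x : ℂ) ^ (i : ℕ)) ᵥ* (D * C * V)) := by
        rw [dotProduct_comm, dotProduct_mulVec, dotProduct_comm]
    _ = _ := sum_congr rfl fun l _ => by rw [hcol]
end
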